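/- Let (P1, P2) ∈ Π(s1, t1) × Π(s2, t2) be a pair of shortest paths, and let (v, w) and (v', w') be two distinct concordant pairs for (P1, P2). Then the subpaths P1[v, w] and P1[v', w'] are vertex-disjoint, and the subpaths P2[v, w] and P2[v', w'] are vertex-disjoint. -/

import Mathlib

open scoped BigOperators

namespace DSP

variable {V : Type*} [Fintype V] [DecidableEq V]

/-- A path: a nonempty list of distinct vertices in which each consecutive
pair is joined by a directed edge. -/
def IsPath (E : V → V → Prop) (p : List V) : Prop :=
  p ≠ [] ∧ p.Nodup ∧ p.Chain' E

/-- A path from `x` to `y`. -/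
def IsPathFrom (E : V → V → Prop) (p : List V) (x y : V) : Prop :=
  IsPath E p ∧ p.head? = some x ∧ p.getLast? = some y

/-- The (ordered) list of edges of a path. -/
def pathEdges (p : List V) : List (V × V) := p.zip p.tail

/-- The weight of a path: the sum of its edge weights. -/
def pathWeight (ℓ : V → V → ℝ) (p : List V) : ℝ :=
  ((pathEdges p).map fun e => ℓ e.1 e.2).sum

/-- `dist x y` : the minimum weight of a path from `x` to `y`
(`⊤` if there is no such path). -/
noncomputable def dist (E : V → V → Prop) (ℓ : V → V → ℝ) (x y : V) : EReal :=
  sInf {w : EReal | ∃ p : List V, IsPathFrom E p x y ∧ (pathWeight ℓ p : EReal) = w}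

/-- A shortest path from `x` to `y` : a path from `x` to `y` whose weight
equals `dist x y`.  `Π(x, y)` is the set of all such paths. -/
def IsShortestPath (E : V → V → Prop) (ℓ : V → V → ℝ) (p : List V) (x y : V) : Prop :=
  IsPathFrom E p x y ∧ (pathWeight ℓ p : EReal) = dist E ℓ x y

/-- A directed cycle: a closed walk with at least one edge whose internal
vertices are pairwise distinct. -/
def IsCycle (E : V → V → Prop) (p : List V) : Prop :=
  2 ≤ p.length ∧ p.Chain' E ∧ p.head? = p.getLast? ∧ p.tail.Nodup

/-- `G` contains no directed cycle of negative or zero total weight. -/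
def NoNonposCycle (E : V → V → Prop) (ℓ : V → V → ℝ) : Prop :=
  ∀ p : List V, IsCycle E p → 0 < pathWeight ℓ p

/-- `G` is a DAG: it contains no directed cycle. -/
def Acyclic (E : V → V → Prop) : Prop :=
  ∀ p : List V, ¬ IsCycle E p

/-- `x` precedes `y` on the path `p` (`x = y` allowed). -/
def Precedes (p : List V) (x y : V) : Prop :=
  x ∈ p ∧ y ∈ p ∧ p.idxOf x ≤ p.idxOf y

/-- `subpath p x y` : the subpath `p[x, y]` of `p` from `x` to `y`
(for `x` preceding `y` on `p`). -/
def subpath (p : List V) (x y : V) : List V :=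
  (p.take (p.idxOf y + 1)).drop (p.idxOf x)

/-- Concatenation `p · q` of two paths (the last vertex of `p` coinciding
with the first vertex of `q`). -/
def pathConcat (p q : List V) : List V := p ++ q.tail

/-- A vertex is internal to a path if it lies on it and is not an endpoint. -/
def Internal (p : List V) (v : V) : Prop :=
  v ∈ p ∧ p.head? ≠ some v ∧ p.getLast? ≠ some v

/-- Paths `p1` from `x1` to `y1` and `p2` from `x2` to `y2` are internally
vertex-disjoint: they share no vertices except possibly those in
`{x1, y1} ∩ {x2, y2}`. -/
def InternallyDisjoint (p1 : List V) (x1 y1 : V) (p2 : List V) (x2 y2 : V) : Prop :=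
  ∀ u, u ∈ p1 → u ∈ p2 → u ∈ ({x1, y1} ∩ {x2, y2} : Set V)

/-- `(a, b)` is a twin-crossing pair for paths `p1`, `p2`. -/
def TwinCrossingPair (p1 p2 : List V) (a b : V) : Prop :=
  a ≠ b ∧ Precedes p1 a b ∧ Precedes p2 a b ∧ subpath p1 a b ≠ subpath p2 a b

/-- The swap operation `φ_{a,b}(P1, P2)`. -/
def swap (p1 : List V) (x1 y1 : V) (p2 : List V) (x2 y2 : V) (a b : V) :
    List V × List V :=
  (pathConcat (pathConcat (subpath p1 x1 a) (subpath p2 a b)) (subpath p1 b y1),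
   pathConcat (pathConcat (subpath p2 x2 a) (subpath p1 a b)) (subpath p2 b y2))

/-- The graph with vertex `u` deleted. -/
def deleteVertex (E : V → V → Prop) (u : V) : V → V → Prop :=
  fun a b => E a b ∧ a ≠ u ∧ b ≠ u

/-- `u` is distance-critical for `(x, y)` : deleting `u` strictly increases
the distance from `x` to `y`. -/
def DistCritical (E : V → V → Prop) (ℓ : V → V → ℝ) (x y u : V) : Prop :=
  dist E ℓ x y < dist (deleteVertex E u) ℓ x y

/-- `Δ(x, y)` : the distance-critical vertices for `(x, y)` together with the
endpoints `x`, `y`. -/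
def Delta (E : V → V → Prop) (ℓ : V → V → ℝ) (x y : V) : Set V :=
  {u | DistCritical E ℓ x y u} ∪ {x, y}

/-- `δ(x, y) = |Δ(x, y)|`. -/
noncomputable def deltaCard (E : V → V → Prop) (ℓ : V → V → ℝ) (x y : V) : ℕ :=
  (Delta E ℓ x y).ncard

/-- `(a, b)` is a concordant pair for paths `p1` (from `x1` to `y1`) and
`p2` (from `x2` to `y2`). -/
def ConcordantPair (p1 : List V) (x1 y1 : V) (p2 : List V) (x2 y2 : V) (a b : V) : Prop :=
  a ∉ ({x1, y1} ∩ {x2, y2} : Set V) ∧ b ∉ ({x1, y1} ∩ {x2, y2} : Set V) ∧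
  Precedes p1 a b ∧ Precedes p2 a b ∧
  InternallyDisjoint (subpath p1 x1 a) x1 a (subpath p2 x2 a) x2 a ∧
  InternallyDisjoint (subpath p1 b y1) b y1 (subpath p2 b y2) b y2

/-- `𝒞(P1, P2)` : the set of concordant pairs for `(P1, P2)`. -/
def concordantSet (p1 : List V) (x1 y1 : V) (p2 : List V) (x2 y2 : V) : Set (V × V) :=
  {c | ConcordantPair p1 x1 y1 p2 x2 y2 c.1 c.2}

/-- The interaction complexity `γ(P1, P2) = Σ_{(v,w) ∈ 𝒞(P1,P2)} δ(v, w)`. -/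
noncomputable def gamma (E : V → V → Prop) (ℓ : V → V → ℝ)
    (p1 : List V) (x1 y1 : V) (p2 : List V) (x2 y2 : V) : ℕ :=
  ∑ᶠ c ∈ concordantSet p1 x1 y1 p2 x2 y2, deltaCard E ℓ c.1 c.2

/-- `E(x, y)` : the set of edges lying on at least one shortest path
from `x` to `y`. -/
def shortestEdges (E : V → V → Prop) (ℓ : V → V → ℝ) (x y : V) : Set (V × V) :=
  {e | ∃ p : List V, IsShortestPath E ℓ p x y ∧ e ∈ pathEdges p}

section Poly

variable (F : Type*) [Field F] [CharP F 2]

/-- The monomial `f(P) = ∏_{e ∈ E(P)} z_e` of a path. -/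
noncomputable def pathMon (p : List V) : MvPolynomial (V × V) F :=
  ((pathEdges p).map fun e => MvPolynomial.X e).prod

/-- The enumerating polynomial of a collection of paths. -/
noncomputable def enumPoly (S : Set (List V)) : MvPolynomial (V × V) F :=
  ∑ᶠ p ∈ S, pathMon F p

/-- The enumerating polynomial of a collection of pairs of paths. -/
noncomputable def enumPoly2 (S : Set (List V × List V)) : MvPolynomial (V × V) F :=
  ∑ᶠ q ∈ S, pathMon F q.1 * pathMon F q.2

variable (E : V → V → Prop) (ℓ : V → V → ℝ)

/-- `F(x, y)` : the enumerating polynomial of `Π(x, y)`. -/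
noncomputable def Fpoly (x y : V) : MvPolynomial (V × V) F :=
  enumPoly F {p : List V | IsShortestPath E ℓ p x y}

end Poly

variable (E : V → V → Prop) (ℓ : V → V → ℝ)

/-- The collection of internally vertex-disjoint pairs
`(P1, P2) ∈ Π(x1, y1) × Π(x2, y2)`. -/
def disjPairs (x1 y1 x2 y2 : V) : Set (List V × List V) :=
  {q | IsShortestPath E ℓ q.1 x1 y1 ∧ IsShortestPath E ℓ q.2 x2 y2 ∧
       InternallyDisjoint q.1 x1 y1 q.2 x2 y2}

/-- Pairs `(P1, P2) ∈ Π(x1, y1) × Π(x2, y2)` such that `v ∈ V(P1) ∩ V(P2)`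
and the prefix `P1[x1, v]` and the suffix `P2[v, y2]` are internally
vertex-disjoint (defining `H_v`). -/
def HvPairs (v x1 y1 x2 y2 : V) : Set (List V × List V) :=
  {q | IsShortestPath E ℓ q.1 x1 y1 ∧ IsShortestPath E ℓ q.2 x2 y2 ∧
       v ∈ q.1 ∧ v ∈ q.2 ∧
       InternallyDisjoint (subpath q.1 x1 v) x1 v (subpath q.2 v y2) v y2}

/-- Pairs `(P1, P2) ∈ Π(x1, y1) × Π(x2, y2)` such that
`(a, v) ∈ E(P1) ∩ E(P2)` and the prefix `P1[x1, a]` and the suffix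
`P2[v, y2]` are internally vertex-disjoint (defining `H_{av}`). -/
def HavPairs (a v x1 y1 x2 y2 : V) : Set (List V × List V) :=
  {q | IsShortestPath E ℓ q.1 x1 y1 ∧ IsShortestPath E ℓ q.2 x2 y2 ∧
       (a, v) ∈ pathEdges q.1 ∧ (a, v) ∈ pathEdges q.2 ∧
       InternallyDisjoint (subpath q.1 x1 a) x1 a (subpath q.2 v y2) v y2}

/-- Pairs `(P1, P2) ∈ Π(x1, y1) × Π(x2, y2)` such that `v ∈ V(P1) ∩ V(P2)`
and the prefix `P1[x1, v]` is internally vertex-disjoint from both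
`P2[x2, v]` and `P2[v, y2]` (defining `D_v`). -/
def DvPairs (v x1 y1 x2 y2 : V) : Set (List V × List V) :=
  {q | IsShortestPath E ℓ q.1 x1 y1 ∧ IsShortestPath E ℓ q.2 x2 y2 ∧
       v ∈ q.1 ∧ v ∈ q.2 ∧
       InternallyDisjoint (subpath q.1 x1 v) x1 v (subpath q.2 x2 v) x2 v ∧
       InternallyDisjoint (subpath q.1 x1 v) x1 v (subpath q.2 v y2) v y2}

/-- Pairs `(P1, P2) ∈ Π(x1, y1) × Π(x2, y2)` with interaction complexity
`γ(P1, P2) ≤ k` (defining `F_{disj,k}`). -/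
def disjkPairs (k : ℤ) (x1 y1 x2 y2 : V) : Set (List V × List V) :=
  {q | IsShortestPath E ℓ q.1 x1 y1 ∧ IsShortestPath E ℓ q.2 x2 y2 ∧
       (gamma E ℓ q.1 x1 y1 q.2 x2 y2 : ℤ) ≤ k}

/-- Pairs `(P1, P2) ∈ Π(x1, y1) × Π(x2, y2)` with `γ(P1, P2) ≤ k` such that
`(v, w) ∈ 𝒞(P1, P2)` and `(v, w)` is the concordant pair appearing first
along `P1` (defining `D_{v,w,k}`). -/
def DvwkPairs (k : ℤ) (v w x1 y1 x2 y2 : V) : Set (List V × List V) :=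
  {q | IsShortestPath E ℓ q.1 x1 y1 ∧ IsShortestPath E ℓ q.2 x2 y2 ∧
       (gamma E ℓ q.1 x1 y1 q.2 x2 y2 : ℤ) ≤ k ∧
       (v, w) ∈ concordantSet q.1 x1 y1 q.2 x2 y2 ∧
       ∀ c ∈ concordantSet q.1 x1 y1 q.2 x2 y2, q.1.idxOf v ≤ q.1.idxOf c.1}

/-- Pairs `(P1, P2) ∈ Π(x1, y1) × Π(x2, y2)` such that `v` and `w` lie on
both paths with `v` preceding `w` on both, the subpaths `P1[x1, v]` and
`P2[w, y2]` are internally vertex-disjoint, and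
`γ(P1[v, y1], P2[x2, w]) ≤ k` (defining `H_{v,w,k}`). -/
def HvwkPairs (k : ℤ) (v w x1 y1 x2 y2 : V) : Set (List V × List V) :=
  {q | IsShortestPath E ℓ q.1 x1 y1 ∧ IsShortestPath E ℓ q.2 x2 y2 ∧
       Precedes q.1 v w ∧ Precedes q.2 v w ∧
       InternallyDisjoint (subpath q.1 x1 v) x1 v (subpath q.2 w y2) w y2 ∧
       (gamma E ℓ (subpath q.1 v y1) v y1 (subpath q.2 x2 w) x2 w : ℤ) ≤ k}

/-- As `HvwkPairs`, additionally requiring the edge `(a, v)` on both paths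
(disjointness imposed on `P1[x1, a]` and `P2[w, y2]`), defining `H_{av,w,k}`. -/
def HavwkPairs (k : ℤ) (a v w x1 y1 x2 y2 : V) : Set (List V × List V) :=
  {q | IsShortestPath E ℓ q.1 x1 y1 ∧ IsShortestPath E ℓ q.2 x2 y2 ∧
       Precedes q.1 v w ∧ Precedes q.2 v w ∧
       (a, v) ∈ pathEdges q.1 ∧ (a, v) ∈ pathEdges q.2 ∧
       InternallyDisjoint (subpath q.1 x1 a) x1 a (subpath q.2 w y2) w y2 ∧
       (gamma E ℓ (subpath q.1 v y1) v y1 (subpath q.2 x2 w) x2 w : ℤ) ≤ k}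

/-- As `HvwkPairs`, additionally requiring the edge `(w, b)` on both paths
(disjointness imposed on `P1[x1, v]` and `P2[b, y2]`), defining `H_{v,wb,k}`. -/
def HvwbkPairs (k : ℤ) (v w b x1 y1 x2 y2 : V) : Set (List V × List V) :=
  {q | IsShortestPath E ℓ q.1 x1 y1 ∧ IsShortestPath E ℓ q.2 x2 y2 ∧
       Precedes q.1 v w ∧ Precedes q.2 v w ∧
       (w, b) ∈ pathEdges q.1 ∧ (w, b) ∈ pathEdges q.2 ∧
       InternallyDisjoint (subpath q.1 x1 v) x1 v (subpath q.2 b y2) b y2 ∧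
       (gamma E ℓ (subpath q.1 v y1) v y1 (subpath q.2 x2 w) x2 w : ℤ) ≤ k}

/-- As `HvwkPairs`, additionally requiring both edges `(a, v)` and `(w, b)`
on both paths (disjointness imposed on `P1[x1, a]` and `P2[b, y2]`),
defining `H_{av,wb,k}`. -/
def HavwbkPairs (k : ℤ) (a v w b x1 y1 x2 y2 : V) : Set (List V × List V) :=
  {q | IsShortestPath E ℓ q.1 x1 y1 ∧ IsShortestPath E ℓ q.2 x2 y2 ∧
       Precedes q.1 v w ∧ Precedes q.2 v w ∧
       (a, v) ∈ pathEdges q.1 ∧ (a, v) ∈ pathEdges q.2 ∧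
       (w, b) ∈ pathEdges q.1 ∧ (w, b) ∈ pathEdges q.2 ∧
       InternallyDisjoint (subpath q.1 x1 a) x1 a (subpath q.2 b y2) b y2 ∧
       (gamma E ℓ (subpath q.1 v y1) v y1 (subpath q.2 x2 w) x2 w : ℤ) ≤ k}

end DSP

/-!
Suppose a vertex `u` lies on both `P₁[v, w]` and `P₁[v', w']`. If `v` and `v'` occur in the same
order on both paths, the earlier one lies on both prefixes ending at the later one, which
concordance makes internally disjoint, so `v = v'`. If they occur in opposite orders, the common
later vertex `w` lets us compare the two shortest paths: optimality of `P₁[v, w]` and of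
`P₂[v', w]` forces the closed walk `P₁[v, v'] · P₂[v', v]` to have nonpositive weight, which the
absence of nonpositive cycles forbids. The same argument around the common earlier vertex `v`
gives `w = w'`, and the claim for `P₂` follows by symmetry.
-/

namespace DSP

theorem exists_eq_append_cons_append_cons_of_not_nodup {α : Type*} {l : List α}
    (h : ¬ l.Nodup) : ∃ u l₁ l₂ l₃, l = l₁ ++ u :: l₂ ++ u :: l₃ := by
  obtain ⟨u, hu⟩ : ∃ u, [u, u].Sublist l := by simpa [List.nodup_iff_sublist] using h
  obtain ⟨r₁, r₂, rfl, hu₁, hu₂⟩ := List.cons_sublist_iff.mp hu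
  obtain ⟨l₁, l₂, rfl⟩ := List.append_of_mem hu₁
  obtain ⟨l₂', l₃, rfl⟩ := List.append_of_mem (List.singleton_sublist.mp hu₂)
  exact ⟨u, l₁, l₂ ++ l₂', l₃, by simp⟩

variable {V : Type*}

def IsWalkFrom (E : V → V → Prop) (p : List V) (x y : V) : Prop :=
  p.IsChain E ∧ p.head? = some x ∧ p.getLast? = some y

variable {E : V → V → Prop} {ℓ : V → V → ℝ}

theorem pathWeight_cons_cons (x y : V) (l : List V) :
    pathWeight ℓ (x :: y :: l) = ℓ x y + pathWeight ℓ (y :: l) := by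
  simp [pathWeight, pathEdges]

theorem pathWeight_append_cons (l₁ : List V) (u : V) (l₂ : List V) :
    pathWeight ℓ (l₁ ++ u :: l₂) = pathWeight ℓ (l₁ ++ [u]) + pathWeight ℓ (u :: l₂) := by
  induction l₁ with
  | nil => simp [pathWeight, pathEdges]
  | cons x t ih =>
    cases t with
    | nil => simp [pathWeight, pathEdges]
    | cons y t =>
      simp only [List.cons_append, pathWeight_cons_cons] at ih ⊢
      rw [ih]
      ring

theorem pathWeight_splice (l₁ l₂ l₃ : List V) (u : V) :
    pathWeight ℓ (l₁ ++ u :: l₂ ++ u :: l₃) =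
      pathWeight ℓ (l₁ ++ u :: l₃) + pathWeight ℓ (u :: l₂ ++ [u]) := by
  have h₁ := pathWeight_append_cons (ℓ := ℓ) l₁ u (l₂ ++ u :: l₃)
  have h₂ := pathWeight_append_cons (ℓ := ℓ) (u :: l₂) u l₃
  have h₃ := pathWeight_append_cons (ℓ := ℓ) l₁ u l₃
  simp only [List.append_assoc, List.cons_append] at *
  linarith

theorem pathConcat_append_singleton_cons (q r : List V) (u : V) :
    pathConcat (q ++ [u]) (u :: r) = q ++ u :: r := by
  simp [pathConcat]

theorem pathWeight_pathConcat {q r : List V} {u : V} (hq : q.getLast? = some u)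
    (hr : r.head? = some u) :
    pathWeight ℓ (pathConcat q r) = pathWeight ℓ q + pathWeight ℓ r := by
  obtain ⟨q, rfl⟩ := List.getLast?_eq_some_iff.mp hq
  obtain ⟨r, rfl⟩ := List.head?_eq_some_iff.mp hr
  rw [pathConcat_append_singleton_cons, pathWeight_append_cons]

theorem IsWalkFrom.concat {p q : List V} {x u y : V} (hp : IsWalkFrom E p x u)
    (hq : IsWalkFrom E q u y) : IsWalkFrom E (pathConcat p q) x y := by
  obtain ⟨hpc, hph, hpl⟩ := hp
  obtain ⟨hqc, hqh, hql⟩ := hq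
  obtain ⟨p, rfl⟩ := List.getLast?_eq_some_iff.mp hpl
  obtain ⟨q, rfl⟩ := List.head?_eq_some_iff.mp hqh
  rw [pathConcat_append_singleton_cons]
  refine ⟨by simpa using hpc.append_overlap (l₃ := q) hqc (List.cons_ne_nil _ _), ?_, ?_⟩
  · cases p <;> simpa using hph
  · rwa [List.getLast?_append_cons]

theorem IsWalkFrom.splice {l₁ l₂ l₃ : List V} {u x y : V}
    (h : IsWalkFrom E (l₁ ++ u :: l₂ ++ u :: l₃) x y) :
    IsWalkFrom E (l₁ ++ u :: l₃) x y ∧ IsWalkFrom E (u :: l₂ ++ [u]) u u := by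
  obtain ⟨hc, hh, hl⟩ := h
  rw [List.getLast?_append_cons] at hl
  refine ⟨⟨?_, by cases l₁ <;> simpa using hh, by rwa [List.getLast?_append_cons]⟩,
    ⟨hc.infix ⟨l₁, l₃, by simp⟩, rfl, List.getLast?_append_cons _ _ _⟩⟩
  simpa using (hc.prefix ⟨l₂ ++ u :: l₃, by simp⟩).append_overlap
    (hc.suffix ⟨l₁ ++ u :: l₂, by simp⟩) (List.cons_ne_nil u [])

theorem IsWalkFrom.pathWeight_pos_of_closed (hG : NoNonposCycle E ℓ) {p : List V} {x : V}
    (hp : IsWalkFrom E p x x) (hlen : 2 ≤ p.length) : 0 < pathWeight ℓ p := by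
  induction hn : p.length using Nat.strong_induction_on generalizing p x with
  | _ n ih =>
  obtain ⟨a, t, rfl⟩ := List.exists_cons_of_length_pos (by omega : 0 < p.length)
  by_cases hnd : t.Nodup
  · exact hG _ ⟨hlen, hp.1, hp.2.1.trans hp.2.2.symm, hnd⟩
  obtain ⟨u, t₁, t₂, t₃, rfl⟩ := exists_eq_append_cons_append_cons_of_not_nodup hnd
  rw [← List.cons_append, ← List.cons_append] at hp ⊢
  obtain ⟨hshort, hloop⟩ := hp.splice
  have := ih _ (by simp at hn ⊢; omega) hshort (by simp; omega) rfl
  have := ih _ (by simp at hn ⊢; omega) hloop (by simp) rfl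
  rw [pathWeight_splice]
  linarith

theorem IsWalkFrom.exists_isPathFrom_pathWeight_le (hG : NoNonposCycle E ℓ) {p : List V}
    {x y : V} (hp : IsWalkFrom E p x y) :
    ∃ q, IsPathFrom E q x y ∧ pathWeight ℓ q ≤ pathWeight ℓ p := by
  induction hn : p.length using Nat.strong_induction_on generalizing p with
  | _ n ih =>
  by_cases hnd : p.Nodup
  · exact ⟨p, ⟨⟨by rintro rfl; simp [IsWalkFrom] at hp, hnd, hp.1⟩, hp.2⟩, le_rfl⟩
  obtain ⟨u, l₁, l₂, l₃, rfl⟩ := exists_eq_append_cons_append_cons_of_not_nodup hnd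
  obtain ⟨hshort, hloop⟩ := hp.splice
  obtain ⟨q, hq, hle⟩ := ih _ (by simp at hn ⊢; omega) hshort rfl
  have := hloop.pathWeight_pos_of_closed hG (by simp)
  exact ⟨q, hq, by rw [pathWeight_splice]; linarith⟩

theorem IsPathFrom.isWalkFrom {p : List V} {x y : V} (h : IsPathFrom E p x y) :
    IsWalkFrom E p x y :=
  ⟨h.1.2.2, h.2⟩

theorem IsPathFrom.two_le_length {p : List V} {x y : V} (h : IsPathFrom E p x y) (hne : x ≠ y) :
    2 ≤ p.length := by
  obtain ⟨_ | ⟨_, t⟩, rfl⟩ := List.head?_eq_some_iff.mp h.2.1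
  · exact absurd (by simpa using h.2.2) hne
  · simp

theorem IsShortestPath.pathWeight_le {P q : List V} {x y : V}
    (hP : IsShortestPath E ℓ P x y) (hq : IsPathFrom E q x y) :
    pathWeight ℓ P ≤ pathWeight ℓ q :=
  EReal.coe_le_coe_iff.mp (hP.2 ▸ sInf_le ⟨q, hq, rfl⟩)

theorem IsShortestPath.pathWeight_le_of_isWalkFrom (hG : NoNonposCycle E ℓ) {P R : List V}
    {x y : V} (hP : IsShortestPath E ℓ P x y) (hR : IsWalkFrom E R x y) :
    pathWeight ℓ P ≤ pathWeight ℓ R := by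
  obtain ⟨q, hq, hle⟩ := hR.exists_isPathFrom_pathWeight_le hG
  exact (hP.pathWeight_le hq).trans hle

section Subpaths

variable [DecidableEq V] {p : List V} {a b c u x y : V}

theorem Precedes.trans (h₁ : Precedes p a b) (h₂ : Precedes p b c) : Precedes p a c :=
  ⟨h₁.1, h₂.2.1, h₁.2.2.trans h₂.2.2⟩

theorem precedes_or_precedes (ha : a ∈ p) (hb : b ∈ p) : Precedes p a b ∨ Precedes p b a :=
  (le_total _ _).imp (⟨ha, hb, ·⟩) (⟨hb, ha, ·⟩)

theorem IsPathFrom.precedes_source (h : IsPathFrom E p x y) (hu : u ∈ p) : Precedes p x u := by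
  obtain ⟨t, rfl⟩ := List.head?_eq_some_iff.mp h.2.1
  exact ⟨List.mem_cons_self, hu, by simp⟩

theorem IsPathFrom.idxOf_target_add_one (h : IsPathFrom E p x y) :
    p.idxOf y + 1 = p.length := by
  obtain ⟨t, rfl⟩ := List.getLast?_eq_some_iff.mp h.2.2
  have hy : y ∉ t := ((List.nodup_concat t y).mp (by simpa using h.1.2.1)).1
  simp [List.idxOf_append_of_notMem hy]

theorem IsPathFrom.precedes_target (h : IsPathFrom E p x y) (hu : u ∈ p) : Precedes p u y := by
  have := List.idxOf_lt_length_of_mem hu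
  exact ⟨hu, List.mem_of_getLast? h.2.2, by have := h.idxOf_target_add_one; omega⟩

theorem mem_subpath_iff (hp : p.Nodup) :
    u ∈ subpath p a b ↔ u ∈ p ∧ p.idxOf a ≤ p.idxOf u ∧ p.idxOf u ≤ p.idxOf b := by
  simp only [subpath, List.mem_drop_iff_getElem, List.getElem_take, List.length_take]
  constructor
  · rintro ⟨j, hj, rfl⟩
    rw [hp.idxOf_getElem]
    exact ⟨List.getElem_mem _, by omega, by omega⟩
  · rintro ⟨hu, hau, hub⟩
    have := List.idxOf_lt_length_of_mem hu
    refine ⟨p.idxOf u - p.idxOf a, by omega, ?_⟩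
    simp only [show p.idxOf a + (p.idxOf u - p.idxOf a) = p.idxOf u by omega, List.getElem_idxOf]

theorem subpath_head? (h : Precedes p a b) : (subpath p a b).head? = some a := by
  have := h.2.2
  rw [subpath, List.head?_drop, List.getElem?_take, if_pos (by omega)]
  exact List.getElem?_idxOf h.1

theorem subpath_getLast? (h : Precedes p a b) : (subpath p a b).getLast? = some b := by
  have := List.idxOf_lt_length_of_mem h.2.1
  have := h.2.2
  rw [subpath, List.getLast?_eq_getElem?, List.getElem?_drop, List.getElem?_take]
  simp only [List.length_drop, List.length_take]
  rw [if_pos (by omega), show p.idxOf a + (min (p.idxOf b + 1) p.length - p.idxOf a - 1) =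
    p.idxOf b by omega]
  exact List.getElem?_idxOf h.2.1

theorem subpath_isPathFrom (hp : IsPath E p) (h : Precedes p a b) :
    IsPathFrom E (subpath p a b) a b := by
  refine ⟨⟨?_, hp.2.1.sublist ((List.drop_sublist _ _).trans (List.take_sublist _ _)),
    (hp.2.2.take _).drop _⟩, subpath_head? h, subpath_getLast? h⟩
  have := subpath_head? h
  rintro h'
  simp [h'] at this

theorem IsPathFrom.subpath_eq_self (h : IsPathFrom E p x y) : subpath p x y = p := by
  rw [subpath, h.idxOf_target_add_one, List.take_length]
  obtain ⟨t, rfl⟩ := List.head?_eq_some_iff.mp h.2.1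
  simp

theorem subpath_eq_pathConcat (hab : Precedes p a b) (hbc : Precedes p b c) :
    subpath p a c = pathConcat (subpath p a b) (subpath p b c) := by
  have hc := List.idxOf_lt_length_of_mem hbc.2.1
  obtain ⟨-, -, hab⟩ := hab
  obtain ⟨-, -, hbc⟩ := hbc
  rw [pathConcat, subpath, subpath, subpath, List.tail_drop,
    show p.take (p.idxOf b + 1) = (p.take (p.idxOf c + 1)).take (p.idxOf b + 1) by
      rw [List.take_take, min_eq_left (by omega)],
    ← List.drop_append_of_le_length (by simp; omega), List.take_append_drop]

theorem pathWeight_subpath_add (hab : Precedes p a b) (hbc : Precedes p b c) :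
    pathWeight ℓ (subpath p a c) =
      pathWeight ℓ (subpath p a b) + pathWeight ℓ (subpath p b c) := by
  rw [subpath_eq_pathConcat hab hbc,
    pathWeight_pathConcat (subpath_getLast? hab) (subpath_head? hbc)]

end Subpaths

section Crossing

variable [DecidableEq V] {P Q : List V} {a b c d x y : V}

theorem IsShortestPath.pathWeight_subpath_le (hG : NoNonposCycle E ℓ)
    (hP : IsShortestPath E ℓ P x y) (hab : Precedes P a b) (hQ : IsWalkFrom E Q a b) :
    pathWeight ℓ (subpath P a b) ≤ pathWeight ℓ Q := by
  have hxa := hP.1.precedes_source hab.1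
  have hby := hP.1.precedes_target hab.2.1
  -- replace `P[a, b]` by `Q` inside `P`
  have hpre := (subpath_isPathFrom hP.1.1 hxa).isWalkFrom.concat hQ
  have hsuf := (subpath_isPathFrom hP.1.1 hby).isWalkFrom
  have hle := hP.pathWeight_le_of_isWalkFrom hG (hpre.concat hsuf)
  have hsplit := pathWeight_subpath_add (ℓ := ℓ) hxa (hab.trans hby)
  rw [hP.1.subpath_eq_self, pathWeight_subpath_add hab hby] at hsplit
  rw [pathWeight_pathConcat hpre.2.2 hsuf.2.1,
    pathWeight_pathConcat (subpath_getLast? hxa) hQ.2.1] at hle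
  linarith

theorem pathWeight_subpath_add_subpath_pos (hG : NoNonposCycle E ℓ) (hP : IsPath E P)
    (hQ : IsPath E Q) (hab : Precedes P a b) (hba : Precedes Q b a) (hne : a ≠ b) :
    0 < pathWeight ℓ (subpath P a b) + pathWeight ℓ (subpath Q b a) := by
  have h₁ := subpath_isPathFrom hP hab
  have h₂ := subpath_isPathFrom hQ hba
  rw [← pathWeight_pathConcat h₁.2.2 h₂.2.1]
  refine (h₁.isWalkFrom.concat h₂.isWalkFrom).pathWeight_pos_of_closed hG ?_
  exact (h₁.two_le_length hne).trans (by simp [pathConcat])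

theorem IsShortestPath.eq_of_crossing_of_common_later (hG : NoNonposCycle E ℓ)
    {x' y' : V} (hP : IsShortestPath E ℓ P x y) (hQ : IsShortestPath E ℓ Q x' y')
    (hab : Precedes P a b) (hbc : Precedes P b c) (hba : Precedes Q b a) (hac : Precedes Q a c) :
    a = b := by
  by_contra hne
  have h₁ := hP.pathWeight_subpath_le hG (hab.trans hbc) (subpath_isPathFrom hQ.1.1 hac).isWalkFrom
  have h₂ := hQ.pathWeight_subpath_le hG (hba.trans hac) (subpath_isPathFrom hP.1.1 hbc).isWalkFrom
  rw [pathWeight_subpath_add hab hbc] at h₁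
  rw [pathWeight_subpath_add hba hac] at h₂
  linarith [pathWeight_subpath_add_subpath_pos hG hP.1.1 hQ.1.1 hab hba hne]

theorem IsShortestPath.eq_of_crossing_of_common_earlier (hG : NoNonposCycle E ℓ)
    {x' y' : V} (hP : IsShortestPath E ℓ P x y) (hQ : IsShortestPath E ℓ Q x' y')
    (hda : Precedes P d a) (hab : Precedes P a b) (hdb : Precedes Q d b) (hba : Precedes Q b a) :
    a = b := by
  by_contra hne
  have h₁ := hP.pathWeight_subpath_le hG (hda.trans hab) (subpath_isPathFrom hQ.1.1 hdb).isWalkFrom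
  have h₂ := hQ.pathWeight_subpath_le hG (hdb.trans hba) (subpath_isPathFrom hP.1.1 hda).isWalkFrom
  rw [pathWeight_subpath_add hda hab] at h₁
  rw [pathWeight_subpath_add hdb hba] at h₂
  linarith [pathWeight_subpath_add_subpath_pos hG hP.1.1 hQ.1.1 hab hba hne]

end Crossing

section Concordant

variable [DecidableEq V] {P₁ P₂ : List V} {s₁ t₁ s₂ t₂ a b v w v' w' u : V}

theorem ConcordantPair.symm (h : ConcordantPair P₁ s₁ t₁ P₂ s₂ t₂ a b) :
    ConcordantPair P₂ s₂ t₂ P₁ s₁ t₁ a b := by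
  obtain ⟨ha, hb, h₁, h₂, hpre, hsuf⟩ := h
  refine ⟨by rwa [Set.inter_comm], by rwa [Set.inter_comm], h₂, h₁, ?_, ?_⟩
  · exact fun u hu₂ hu₁ => Set.inter_comm _ _ ▸ hpre u hu₁ hu₂
  · exact fun u hu₂ hu₁ => Set.inter_comm _ _ ▸ hsuf u hu₁ hu₂

theorem ConcordantPair.eq_left_of_precedes (hP₁ : IsPathFrom E P₁ s₁ t₁)
    (hP₂ : IsPathFrom E P₂ s₂ t₂) (hc : ConcordantPair P₁ s₁ t₁ P₂ s₂ t₂ a b)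
    (hu : u ∉ ({s₁, t₁} ∩ {s₂, t₂} : Set V)) (h₁ : Precedes P₁ u a) (h₂ : Precedes P₂ u a) :
    u = a := by
  have hu₁ := (mem_subpath_iff hP₁.1.2.1).mpr ⟨h₁.1, (hP₁.precedes_source h₁.1).2.2, h₁.2.2⟩
  have hu₂ := (mem_subpath_iff hP₂.1.2.1).mpr ⟨h₂.1, (hP₂.precedes_source h₂.1).2.2, h₂.2.2⟩
  obtain ⟨h | h, h' | h'⟩ := hc.2.2.2.2.1 u hu₁ hu₂ <;> simp_all

theorem ConcordantPair.eq_right_of_precedes (hP₁ : IsPathFrom E P₁ s₁ t₁)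
    (hP₂ : IsPathFrom E P₂ s₂ t₂) (hc : ConcordantPair P₁ s₁ t₁ P₂ s₂ t₂ a b)
    (hu : u ∉ ({s₁, t₁} ∩ {s₂, t₂} : Set V)) (h₁ : Precedes P₁ b u) (h₂ : Precedes P₂ b u) :
    u = b := by
  have hu₁ := (mem_subpath_iff hP₁.1.2.1).mpr ⟨h₁.2.1, h₁.2.2, (hP₁.precedes_target h₁.2.1).2.2⟩
  have hu₂ := (mem_subpath_iff hP₂.1.2.1).mpr ⟨h₂.2.1, h₂.2.2, (hP₂.precedes_target h₂.2.1).2.2⟩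
  obtain ⟨h | h, h' | h'⟩ := hc.2.2.2.2.2 u hu₁ hu₂ <;> simp_all

theorem ConcordantPair.left_eq_of_mem_subpath (hG : NoNonposCycle E ℓ)
    (h₁ : IsShortestPath E ℓ P₁ s₁ t₁) (h₂ : IsShortestPath E ℓ P₂ s₂ t₂)
    (hc : ConcordantPair P₁ s₁ t₁ P₂ s₂ t₂ v w) (hc' : ConcordantPair P₁ s₁ t₁ P₂ s₂ t₂ v' w')
    (hu : u ∈ subpath P₁ v w) (hu' : u ∈ subpath P₁ v' w') : v = v' := by
  wlog hvv' : Precedes P₁ v v' generalizing v w v' w'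
  · exact (this hc' hc hu' hu
      ((precedes_or_precedes hc.2.2.1.1 hc'.2.2.1.1).resolve_left hvv')).symm
  obtain ⟨hv, -, hvw₁, hvw₂, -, -⟩ := hc
  have hv'w' : Precedes P₂ v' w' := hc'.2.2.2.1
  obtain ⟨-, -, huw⟩ := (mem_subpath_iff h₁.1.1.2.1).mp hu
  obtain ⟨-, hv'u, -⟩ := (mem_subpath_iff h₁.1.1.2.1).mp hu'
  rcases precedes_or_precedes hvw₂.1 hv'w'.1 with h | h
  · exact hc'.eq_left_of_precedes h₁.1 h₂.1 hv hvv' h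
  · exact h₁.eq_of_crossing_of_common_later hG h₂ hvv' ⟨hvv'.2.1, hvw₁.2.1, hv'u.trans huw⟩ h hvw₂

theorem ConcordantPair.right_eq_of_left_eq (hG : NoNonposCycle E ℓ)
    (h₁ : IsShortestPath E ℓ P₁ s₁ t₁) (h₂ : IsShortestPath E ℓ P₂ s₂ t₂)
    (hc : ConcordantPair P₁ s₁ t₁ P₂ s₂ t₂ v w) (hc' : ConcordantPair P₁ s₁ t₁ P₂ s₂ t₂ v w') :
    w = w' := by
  wlog hww' : Precedes P₁ w w' generalizing w w'
  · exact (this hc' hc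
      ((precedes_or_precedes hc.2.2.1.2.1 hc'.2.2.1.2.1).resolve_left hww')).symm
  have hvw₂ : Precedes P₂ v w := hc.2.2.2.1
  obtain ⟨-, hw', -, hvw₂', -, -⟩ := hc'
  rcases precedes_or_precedes hvw₂.2.1 hvw₂'.2.1 with h | h
  · exact (hc.eq_right_of_precedes h₁.1 h₂.1 hw' hww' h).symm
  · exact h₁.eq_of_crossing_of_common_earlier hG h₂ hc.2.2.1 hww' hvw₂' h

theorem ConcordantPair.eq_of_mem_subpath (hG : NoNonposCycle E ℓ)
    (h₁ : IsShortestPath E ℓ P₁ s₁ t₁) (h₂ : IsShortestPath E ℓ P₂ s₂ t₂)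
    (hc : ConcordantPair P₁ s₁ t₁ P₂ s₂ t₂ v w) (hc' : ConcordantPair P₁ s₁ t₁ P₂ s₂ t₂ v' w')
    (hu : u ∈ subpath P₁ v w) (hu' : u ∈ subpath P₁ v' w') : (v, w) = (v', w') := by
  obtain rfl := hc.left_eq_of_mem_subpath hG h₁ h₂ hc' hu hu'
  rw [hc.right_eq_of_left_eq hG h₁ h₂ hc']

end Concordant

end DSP

namespace DSP

variable {V : Type*} [Fintype V] [DecidableEq V] (E : V → V → Prop) (ℓ : V → V → ℝ)

/-- Distinct concordant pairs `(v, w)` and `(v', w')` for a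
pair `(P1, P2) ∈ Π(s1, t1) × Π(s2, t2)` have vertex-disjoint subpaths on `P1`
and vertex-disjoint subpaths on `P2`. -/
theorem concordant_pairs_vertex_disjoint
    (hG : NoNonposCycle E ℓ) (s1 t1 s2 t2 v w v' w' : V) (P1 P2 : List V)
    (h1 : IsShortestPath E ℓ P1 s1 t1) (h2 : IsShortestPath E ℓ P2 s2 t2)
    (hc : ConcordantPair P1 s1 t1 P2 s2 t2 v w)
    (hc' : ConcordantPair P1 s1 t1 P2 s2 t2 v' w')
    (hne : (v, w) ≠ (v', w')) :
    (∀ u, u ∈ subpath P1 v w → u ∉ subpath P1 v' w') ∧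
    (∀ u, u ∈ subpath P2 v w → u ∉ subpath P2 v' w') :=
  ⟨fun _ hu hu' => hne (hc.eq_of_mem_subpath hG h1 h2 hc' hu hu'),
    fun _ hu hu' => hne (hc.symm.eq_of_mem_subpath hG h2 h1 hc'.symm hu hu')⟩

end DSP
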